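/- arXiv:1009.0285 — 2 statements merged into one kernel-verified Lean document; each statement's English description precedes it below -/
import Mathlib

section
/- Let m and k be positive integers with m ≠ k, and let p(y) = √(k² + (m² − k²)cos²y). Then every twice continuously differentiable 2π-periodic function φ : ℝ → ℝ satisfying −(1/p(y))(p(y)φ'(y))' + (k²/p(y)² − 2)φ(y) = 0 for all y is a constant multiple of sin y; that is, the eigenvalue λ = 2 of the periodic Sturm–Liouville problem with l = k has multiplicity one. -/
/-!
The weighted Wronskian `W = p (φ' sin - φ cos)` of a solution `φ` with the solution `sin` is
constant (Abel). For `m ≠ k` it must vanish: the function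
`G = ((k² - m²) / (p + m) - p) sin φ - p φ' cos` is `2π`-periodic with
`G' = (k² - m²) W / (p (p + m))`, so Rolle's theorem produces a zero of `W`.
Once `W = 0`, `φ / sin` is locally constant away from the zeros of `sin`, and differentiability
of `φ` at those zeros forces all the constants to equal `φ'(0)`.
-/

open Real Set Filter Topology

lemma Function.Periodic.deriv {𝕜 F : Type*} [NontriviallyNormedField 𝕜] [NormedAddCommGroup F]
    [NormedSpace 𝕜 F] {f : 𝕜 → F} {c : 𝕜} (hf : Function.Periodic f c) :
    Function.Periodic (deriv f) c := fun x => by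
  rw [← deriv_comp_add_const, show (fun x => f (x + c)) = f from funext hf]

lemma HasDerivAt.eq_of_eventuallyEq_nhdsGT {F : Type*} [NormedAddCommGroup F] [NormedSpace ℝ F]
    {f g : ℝ → F} {f' g' : F} {x : ℝ} (hf : HasDerivAt f f' x)
    (hg : HasDerivAt g g' x) (hfg : f =ᶠ[𝓝[>] x] g) (hx : f x = g x) : f' = g' :=
  (uniqueDiffWithinAt_Ioi x).eq_deriv _
    (hf.hasDerivWithinAt.congr_of_eventuallyEq hfg.symm hx.symm) hg.hasDerivWithinAt

section DerivMulSin

variable {f : ℝ → ℝ} (hf : Differentiable ℝ f) (h : ∀ y, deriv f y * sin y = f y * cos y)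
include hf h

lemma eq_deriv_zero_mul_sin_of_mem_Ioo {y : ℝ} (hy : y ∈ Ioo 0 π) :
    f y = deriv f 0 * sin y := by
  have hsin : ∀ t ∈ Ioo 0 π, sin t ≠ 0 := fun t ht => (sin_pos_of_pos_of_lt_pi ht.1 ht.2).ne'
  have hquot : ∀ t ∈ Ioo 0 π, HasDerivAt (fun t => f t / sin t) 0 t := fun t ht =>
    ((hf t).hasDerivAt.div (hasDerivAt_sin t) (hsin t ht)).congr_deriv (by simp [h t])
  obtain ⟨c, hc⟩ := isOpen_Ioo.exists_is_const_of_deriv_eq_zero isPreconnected_Ioo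
    (fun t ht => (hquot t ht).differentiableAt.differentiableWithinAt)
    (fun t ht => (hquot t ht).deriv)
  have hf_eq : ∀ t ∈ Ioo 0 π, f t = c * sin t := fun t ht => by
    rw [← hc t ht, div_mul_cancel₀ _ (hsin t ht)]
  have hf0 : f 0 = 0 := by simpa using (h 0).symm
  have hc0 : deriv f 0 = c := by
    refine (hf 0).hasDerivAt.eq_of_eventuallyEq_nhdsGT
      (by simpa using (hasDerivAt_sin 0).const_mul c) ?_ (by simp [hf0])
    filter_upwards [Ioo_mem_nhdsGT pi_pos] with t ht using hf_eq t ht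
  rw [hc0, hf_eq y hy]

theorem eq_deriv_zero_mul_sin_of_periodic (hper : Function.Periodic f (2 * π)) (y : ℝ) :
    f y = deriv f 0 * sin y := by
  have hf_neg : Differentiable ℝ (fun t => f (-t)) := hf.comp differentiable_neg
  have h_neg : ∀ t, deriv (fun t => f (-t)) t * sin t = f (-t) * cos t := fun t => by
    rw [deriv_comp_neg, ← cos_neg, ← h (-t), sin_neg]; ring
  have hfπ : f π = 0 := by simpa using h π
  have hper' : Function.Periodic (fun t => f t - deriv f 0 * sin t) (2 * π) :=
    fun t => by simp only [hper t, sin_add_two_pi]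
  obtain ⟨t, ht, hyt⟩ := hper'.exists_mem_Ioc (by positivity) y (-π)
  rw [← sub_eq_zero, hyt, sub_eq_zero]
  rcases lt_trichotomy t 0 with htn | rfl | htp
  · have := eq_deriv_zero_mul_sin_of_mem_Ioo hf_neg h_neg (y := -t)
      ⟨by linarith, by linarith [ht.1]⟩
    simpa [deriv_comp_neg] using this
  · simpa using (h 0).symm
  · rcases ht.2.lt_or_eq with htπ | rfl
    · exact eq_deriv_zero_mul_sin_of_mem_Ioo hf h ⟨htp, by linarith⟩
    · rw [show -π + 2 * π = π by ring, hfπ, sin_pi, mul_zero]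

end DerivMulSin

noncomputable def lawsonWeight (m k y : ℝ) : ℝ := √(k ^ 2 + (m ^ 2 - k ^ 2) * cos y ^ 2)

section LawsonWeight

variable {m k : ℝ}

lemma lawsonWeight_radicand_pos (hm : m ≠ 0) (hk : k ≠ 0) (y : ℝ) :
    0 < k ^ 2 + (m ^ 2 - k ^ 2) * cos y ^ 2 := by
  have hsplit : k ^ 2 + (m ^ 2 - k ^ 2) * cos y ^ 2 = k ^ 2 * sin y ^ 2 + m ^ 2 * cos y ^ 2 := by
    rw [sin_sq]; ring
  rw [hsplit]
  rcases eq_or_ne (cos y) 0 with hc | hc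
  · simp only [hc, sin_sq]; positivity
  · positivity

lemma lawsonWeight_pos (hm : m ≠ 0) (hk : k ≠ 0) (y : ℝ) : 0 < lawsonWeight m k y :=
  sqrt_pos.mpr (lawsonWeight_radicand_pos hm hk y)

lemma lawsonWeight_sq (hm : m ≠ 0) (hk : k ≠ 0) (y : ℝ) :
    lawsonWeight m k y ^ 2 = k ^ 2 + (m ^ 2 - k ^ 2) * cos y ^ 2 :=
  sq_sqrt (lawsonWeight_radicand_pos hm hk y).le

lemma lawsonWeight_periodic : Function.Periodic (lawsonWeight m k) (2 * π) := fun y => by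
  simp only [lawsonWeight, cos_add_two_pi]

lemma hasDerivAt_lawsonWeight (hm : m ≠ 0) (hk : k ≠ 0) (y : ℝ) :
    HasDerivAt (lawsonWeight m k) ((k ^ 2 - m ^ 2) * sin y * cos y / lawsonWeight m k y) y := by
  have hrad : HasDerivAt (fun t => k ^ 2 + (m ^ 2 - k ^ 2) * cos t ^ 2)
      ((m ^ 2 - k ^ 2) * (2 * cos y * -sin y)) y := by
    simpa using (((hasDerivAt_cos y).pow 2).const_mul (m ^ 2 - k ^ 2)).const_add (k ^ 2)
  refine ((hasDerivAt_sqrt (lawsonWeight_radicand_pos hm hk y).ne').comp y hrad).congr_deriv ?_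
  rw [← lawsonWeight]
  field_simp
  ring

end LawsonWeight

/-- The Sturm–Liouville equation of `τ_{m,k}` with `l = k` and `λ = 2`, in the divergence form
`(p φ')' = (k² / p - 2 p) φ`. -/
structure IsLawsonSolution (m k : ℝ) (φ : ℝ → ℝ) : Prop where
  differentiable : Differentiable ℝ φ
  hasDerivAt_flux : ∀ y, HasDerivAt (fun t => lawsonWeight m k t * deriv φ t)
    ((k ^ 2 / lawsonWeight m k y - 2 * lawsonWeight m k y) * φ y) y

lemma isLawsonSolution_of_contDiff {m k : ℝ} (hm : m ≠ 0) (hk : k ≠ 0) {φ : ℝ → ℝ}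
    (hφ : ContDiff ℝ 2 φ)
    (heq : ∀ y, -(1 / lawsonWeight m k y) * deriv (fun y' => lawsonWeight m k y' * deriv φ y') y
      + (k ^ 2 / lawsonWeight m k y ^ 2 - 2) * φ y = 0) :
    IsLawsonSolution m k φ where
  differentiable := hφ.differentiable (by norm_num)
  hasDerivAt_flux y := by
    have hflux : HasDerivAt (fun t => lawsonWeight m k t * deriv φ t)
        (deriv (fun t => lawsonWeight m k t * deriv φ t) y) y :=
      ((hasDerivAt_lawsonWeight hm hk y).differentiableAt.mul
        (hφ.differentiable_deriv_two y)).hasDerivAt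
    refine hflux.congr_deriv ?_
    have hp := (lawsonWeight_pos hm hk y).ne'
    have h := heq y
    field_simp at h ⊢
    linear_combination -h

noncomputable def lawsonWronskian (m k : ℝ) (φ : ℝ → ℝ) (y : ℝ) : ℝ :=
  lawsonWeight m k y * (deriv φ y * sin y - φ y * cos y)

/-- A periodic primitive of `(k² - m²) / (p (p + m)) * W`, found by integrating by parts: the
coefficient `(k² - m²) / (p + m) = (p - m) / sin²` is the only choice that stays smooth at the
zeros of `sin`. -/
noncomputable def lawsonPrimitive (m k : ℝ) (φ : ℝ → ℝ) (y : ℝ) : ℝ :=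
  ((k ^ 2 - m ^ 2) / (lawsonWeight m k y + m) - lawsonWeight m k y) * sin y * φ y
    - lawsonWeight m k y * deriv φ y * cos y

namespace IsLawsonSolution

variable {m k : ℝ} {φ : ℝ → ℝ} (hsol : IsLawsonSolution m k φ)
include hsol

theorem hasDerivAt_lawsonWronskian (hm : m ≠ 0) (hk : k ≠ 0) (y : ℝ) :
    HasDerivAt (lawsonWronskian m k φ) 0 y := by
  have hp := (lawsonWeight_pos hm hk y).ne'
  have hsq := lawsonWeight_sq hm hk y
  have hφ := (hsol.differentiable y).hasDerivAt
  have h : HasDerivAt (fun t => lawsonWeight m k t * deriv φ t * sin t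
      - lawsonWeight m k t * φ t * cos t) _ y :=
    ((hsol.hasDerivAt_flux y).mul (hasDerivAt_sin y)).sub
      (((hasDerivAt_lawsonWeight hm hk y).mul hφ).mul (hasDerivAt_cos y))
  have hW : lawsonWronskian m k φ = fun t => lawsonWeight m k t * deriv φ t * sin t
      - lawsonWeight m k t * φ t * cos t := by
    funext t; simp only [lawsonWronskian]; ring
  rw [hW]
  refine h.congr_deriv ?_
  simp only [Pi.mul_apply]
  field_simp
  linear_combination (-(φ y * sin y)) * hsq

theorem hasDerivAt_lawsonPrimitive (hm : 0 < m) (hk : k ≠ 0) (y : ℝ) :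
    HasDerivAt (lawsonPrimitive m k φ)
      ((k ^ 2 - m ^ 2) / (lawsonWeight m k y * (lawsonWeight m k y + m)) *
        lawsonWronskian m k φ y) y := by
  have hp := lawsonWeight_pos hm.ne' hk y
  have hpm : lawsonWeight m k y + m ≠ 0 := by positivity
  have hsq := lawsonWeight_sq hm.ne' hk y
  have hp' := hasDerivAt_lawsonWeight hm.ne' hk y
  have hφ := (hsol.differentiable y).hasDerivAt
  have hcoef := ((hasDerivAt_const y (k ^ 2 - m ^ 2)).div (hp'.add_const m) hpm).sub hp'
  have h : HasDerivAt (fun t => ((k ^ 2 - m ^ 2) / (lawsonWeight m k t + m) - lawsonWeight m k t)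
      * sin t * φ t - lawsonWeight m k t * deriv φ t * cos t) _ y :=
    ((hcoef.mul (hasDerivAt_sin y)).mul hφ).sub ((hsol.hasDerivAt_flux y).mul (hasDerivAt_cos y))
  refine h.congr_deriv ?_
  simp only [lawsonWronskian, Pi.mul_apply, Pi.sub_apply, Pi.div_apply]
  field_simp
  linear_combination (φ y * cos y * (2 * lawsonWeight m k y * m + lawsonWeight m k y ^ 2 + k ^ 2))
    * (hsq + (m ^ 2 - k ^ 2) * sin_sq_add_cos_sq y)

theorem lawsonWronskian_eq_zero (hm : 0 < m) (hk : k ≠ 0) (hmk : k ^ 2 ≠ m ^ 2)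
    (hper : Function.Periodic φ (2 * π)) (y : ℝ) : lawsonWronskian m k φ y = 0 := by
  have hG := hsol.hasDerivAt_lawsonPrimitive hm hk
  have hG_per : lawsonPrimitive m k φ 0 = lawsonPrimitive m k φ (0 + 2 * π) := by
    simp only [lawsonPrimitive, lawsonWeight_periodic 0, hper 0, hper.deriv 0, sin_add_two_pi,
      cos_add_two_pi]
  obtain ⟨ξ, -, hξ⟩ := exists_hasDerivAt_eq_zero (show (0 : ℝ) < 2 * π by positivity)
    (fun t _ => (hG t).continuousAt.continuousWithinAt) (by simpa using hG_per) (fun t _ => hG t)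
  have hWξ : lawsonWronskian m k φ ξ = 0 := (mul_eq_zero.mp hξ).resolve_left <|
    div_ne_zero (sub_ne_zero.mpr hmk) (by have := lawsonWeight_pos hm.ne' hk ξ; positivity)
  rw [← hWξ]
  have hW := hsol.hasDerivAt_lawsonWronskian hm.ne' hk
  exact is_const_of_deriv_eq_zero (fun t => (hW t).differentiableAt) (fun t => (hW t).deriv) y ξ

theorem eq_deriv_zero_mul_sin (hm : 0 < m) (hk : k ≠ 0) (hmk : k ^ 2 ≠ m ^ 2)
    (hper : Function.Periodic φ (2 * π)) (y : ℝ) : φ y = deriv φ 0 * sin y := by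
  refine eq_deriv_zero_mul_sin_of_periodic hsol.differentiable (fun t => ?_) hper y
  have hW := hsol.lawsonWronskian_eq_zero hm hk hmk hper t
  rw [lawsonWronskian, mul_eq_zero, sub_eq_zero] at hW
  exact hW.resolve_left (lawsonWeight_pos hm.ne' hk t).ne'

end IsLawsonSolution

/-- For `m ≠ k`, the eigenvalue `λ = 2` of the periodic Sturm–Liouville problem with `l = k`
has multiplicity one: every `C²` `2π`-periodic solution is a constant multiple of `sin y`. -/
theorem multiplicity_one_sin (m k : ℕ) (hm : 0 < m) (hk : 0 < k) (hmk : m ≠ k)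
    (p : ℝ → ℝ)
    (hp : ∀ y : ℝ, p y = Real.sqrt ((k : ℝ) ^ 2 + ((m : ℝ) ^ 2 - (k : ℝ) ^ 2) * Real.cos y ^ 2))
    (φ : ℝ → ℝ) (hφ : ContDiff ℝ 2 φ)
    (hper : ∀ y : ℝ, φ (y + 2 * π) = φ y)
    (heq : ∀ y : ℝ,
      -(1 / p y) * deriv (fun y' => p y' * deriv φ y') y
        + ((k : ℝ) ^ 2 / (p y) ^ 2 - 2) * φ y = 0) :
    ∃ c : ℝ, ∀ y : ℝ, φ y = c * Real.sin y := by
  obtain rfl : p = lawsonWeight m k := funext hp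
  have hk' : (k : ℝ) ≠ 0 := by positivity
  have hmk' : (k : ℝ) ^ 2 ≠ (m : ℝ) ^ 2 := by
    exact_mod_cast (Nat.pow_left_injective two_ne_zero).ne hmk.symm
  have hsol := isLawsonSolution_of_contDiff (by positivity) hk' hφ heq
  exact ⟨deriv φ 0, hsol.eq_deriv_zero_mul_sin (by positivity) hk' hmk' hper⟩
end

section
/- Let m and k be positive integers with m ≠ k, and define F : (−π/2, π/2) → ℝ by F(y) = cos y · ∫₀^y dξ / (cos²ξ · √(k² + (m² − k²)cos²ξ)). Then F(y) tends to 1/k as y tends to π/2 from the left. -/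
open Real Filter Set Topology

/-!
On `(-π/2, π/2)` the integrand `1/(cos²ξ √q)`, with `q = k² + (m² − k²) cos²ξ > 0`, equals
`1/(k cos²ξ)` plus `(k² − q)/(k cos²ξ √q (k + √q)) = -(m² − k²)/(k √q (k + √q))`, which is
continuous because the factor `cos²ξ` cancels.
Integrating, `F y = sin y / k + cos y · (a continuous primitive)`, which tends to `1/k`.
-/

theorem sq_add_sub_sq_mul_cos_sq_pos {a b : ℝ} (ha : a ≠ 0) (hb : b ≠ 0) (ξ : ℝ) :
    0 < a ^ 2 + (b ^ 2 - a ^ 2) * cos ξ ^ 2 := by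
  have hsplit : a ^ 2 + (b ^ 2 - a ^ 2) * cos ξ ^ 2 = a ^ 2 * sin ξ ^ 2 + b ^ 2 * cos ξ ^ 2 := by
    linear_combination -a ^ 2 * sin_sq_add_cos_sq ξ
  rw [hsplit]
  rcases eq_or_ne (sin ξ) 0 with hs | hs
  · have hc : cos ξ ^ 2 = 1 := by simpa [hs] using sin_sq_add_cos_sq ξ
    simpa [hs, hc] using sq_pos_of_ne_zero hb
  · positivity

theorem one_div_mul_sqrt_sq_add_eq {k c x : ℝ} (hk : 0 < k) (hx : x ≠ 0)
    (hq : 0 < k ^ 2 + c * x) :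
    1 / (x * √(k ^ 2 + c * x)) =
      1 / k / x + -c / (k * √(k ^ 2 + c * x) * (k + √(k ^ 2 + c * x))) := by
  have hs2 : √(k ^ 2 + c * x) ^ 2 = k ^ 2 + c * x := sq_sqrt hq.le
  have hs : 0 < √(k ^ 2 + c * x) := sqrt_pos.mpr hq
  set s := √(k ^ 2 + c * x)
  field_simp
  linear_combination -hs2

theorem uIcc_zero_subset_Ioo_neg_pi_div_two {y : ℝ} (hy : y ∈ Ioo (-(π / 2)) (π / 2)) :
    uIcc 0 y ⊆ Ioo (-(π / 2)) (π / 2) :=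
  ordConnected_Ioo.uIcc_subset ⟨by linarith [pi_pos], by linarith [pi_pos]⟩ hy

section

variable {g h : ℝ → ℝ} {a : ℝ}

theorem integral_eq_mul_tan_add_integral (hh : Continuous h)
    (hg : EqOn g (fun ξ => a / cos ξ ^ 2 + h ξ) (Ioo (-(π / 2)) (π / 2)))
    {y : ℝ} (hy : y ∈ Ioo (-(π / 2)) (π / 2)) :
    ∫ ξ in (0 : ℝ)..y, g ξ = a * tan y + ∫ ξ in (0 : ℝ)..y, h ξ := by
  have hsub := uIcc_zero_subset_Ioo_neg_pi_div_two hy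
  have hcos : ∀ ξ ∈ uIcc 0 y, cos ξ ≠ 0 := fun ξ hξ => (cos_pos_of_mem_Ioo (hsub hξ)).ne'
  have hderiv : ∀ ξ ∈ uIcc 0 y, HasDerivAt (fun t => a * tan t) (a / cos ξ ^ 2) ξ :=
    fun ξ hξ =>
    ((hasDerivAt_tan (hcos ξ hξ)).const_mul a).congr_deriv (mul_one_div _ _)
  have hint : IntervalIntegrable (fun ξ => a / cos ξ ^ 2) MeasureTheory.volume 0 y :=
    (continuousOn_const.div (by fun_prop) fun ξ hξ =>
      pow_ne_zero 2 (hcos ξ hξ)).intervalIntegrable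
  rw [intervalIntegral.integral_congr fun ξ hξ => hg (hsub hξ),
    intervalIntegral.integral_add hint (hh.intervalIntegrable 0 y),
    intervalIntegral.integral_eq_sub_of_hasDerivAt hderiv hint]
  simp

theorem tendsto_cos_mul_integral_of_eqOn (hh : Continuous h)
    (hg : EqOn g (fun ξ => a / cos ξ ^ 2 + h ξ) (Ioo (-(π / 2)) (π / 2))) :
    Tendsto (fun y => cos y * ∫ ξ in (0 : ℝ)..y, g ξ) (𝓝[<] (π / 2)) (𝓝 a) := by
  have hIoo : Ioo (-(π / 2)) (π / 2) ∈ 𝓝[<] (π / 2) :=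
    Ioo_mem_nhdsLT (by linarith [pi_pos])
  have heq : (fun y => a * sin y + cos y * ∫ ξ in (0 : ℝ)..y, h ξ)
      =ᶠ[𝓝[<] (π / 2)] fun y => cos y * ∫ ξ in (0 : ℝ)..y, g ξ := by
    filter_upwards [hIoo] with y hy
    have hcos : cos y ≠ 0 := (cos_pos_of_mem_Ioo hy).ne'
    rw [integral_eq_mul_tan_add_integral hh hg hy, tan_eq_sin_div_cos]
    field_simp
  have hlim : Tendsto (fun y => a * sin y + cos y * ∫ ξ in (0 : ℝ)..y, h ξ)
      (𝓝 (π / 2)) (𝓝 a) := by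
    refine Continuous.tendsto' (by fun_prop) _ _ ?_
    simp
  exact (hlim.mono_left nhdsWithin_le_nhds).congr' heq

end

theorem limit_of_F_general (m k : ℕ) (hm : 0 < m) (hk : 0 < k)
    (F : ℝ → ℝ)
    (hF : ∀ y : ℝ, F y = Real.cos y *
      ∫ ξ in (0 : ℝ)..y, 1 / (Real.cos ξ ^ 2 *
        Real.sqrt ((k : ℝ) ^ 2 + ((m : ℝ) ^ 2 - (k : ℝ) ^ 2) * Real.cos ξ ^ 2))) :
    Tendsto F (nhdsWithin (π / 2) (Set.Iio (π / 2))) (nhds (1 / (k : ℝ))) := by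
  have hK : (0 : ℝ) < k := by exact_mod_cast hk
  set c : ℝ := (m : ℝ) ^ 2 - (k : ℝ) ^ 2
  have hq : ∀ ξ, 0 < (k : ℝ) ^ 2 + c * cos ξ ^ 2 := sq_add_sub_sq_mul_cos_sq_pos
    hK.ne' (by exact_mod_cast hm.ne')
  have hden : ∀ ξ, 0 < (k : ℝ) * √((k : ℝ) ^ 2 + c * cos ξ ^ 2) *
      (k + √((k : ℝ) ^ 2 + c * cos ξ ^ 2)) := fun ξ => by
    have := sqrt_pos.mpr (hq ξ)
    positivity
  rw [show F = _ from funext hF]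
  refine tendsto_cos_mul_integral_of_eqOn ?_ fun ξ hξ =>
    one_div_mul_sqrt_sq_add_eq hK (pow_ne_zero 2 (cos_pos_of_mem_Ioo hξ).ne') (hq ξ)
  exact continuous_const.div (by fun_prop) fun ξ => (hden ξ).ne'

/-- The function `F(y) = cos y · ∫₀^y dξ/(cos²ξ √(k² + (m² − k²)cos²ξ))` tends to `1/k`
as `y → π/2` from the left. -/
theorem limit_of_F (m k : ℕ) (hm : 0 < m) (hk : 0 < k) (hmk : m ≠ k)
    (F : ℝ → ℝ)
    (hF : ∀ y : ℝ, F y = Real.cos y *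
      ∫ ξ in (0 : ℝ)..y, 1 / (Real.cos ξ ^ 2 *
        Real.sqrt ((k : ℝ) ^ 2 + ((m : ℝ) ^ 2 - (k : ℝ) ^ 2) * Real.cos ξ ^ 2))) :
    Tendsto F (nhdsWithin (π / 2) (Set.Iio (π / 2))) (nhds (1 / (k : ℝ))) :=
  limit_of_F_general m k hm hk F hF
end
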